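/- arXiv:1610.06527 — 2 statements merged into one kernel-verified Lean document; each statement's English description precedes it below -/
import Mathlib

section
/- Hardy-type inequality: for h : ℝ → ℝ differentiable with x² h'(x) ∈ L²(ℝ) and h(x) → 0 as |x| → ∞, one has ‖x h(x)‖_{L²(ℝ)} ≤ C ‖x² h'(x)‖_{L²(ℝ)} for a universal constant C. -/
open MeasureTheory Real Filter Set Topology

/-!
With `F x = x³ k(x)² / 3` one has `F' = (x k)² + (2/3)(x k)(x² k')`, and `0 ≤ (x k + (2/3) x² k')²`
rearranges to `(x k)² ≤ 2 F' + (4/9)(x² k')²`. Integrating over `[a, b]` gives a Hardy inequality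
with boundary term `(2/3)(b³ k(b)² - a³ k(a)²)`. Applied to `k = h - h(-R)` on `[-R, 0]` and to
`k = h - h(R)` on `[0, R]` the boundary terms vanish; for fixed `r ≤ R` this bounds the integrals
over `[-r, 0]` and `[0, r]`, and `h(±R) → 0` then yields
`∫_{-r}^{r} (x h)² ≤ (4/9) ∫ (x² h')²` for every `r`, hence integrability of `(x h)²` and the
inequality with `C = 2/3`.
-/

theorem hardy_intervalIntegral_le {k k' : ℝ → ℝ} {a b : ℝ} (hab : a ≤ b)
    (hk : ∀ x ∈ uIcc a b, HasDerivAt k (k' x) x) (hk' : ContinuousOn k' (uIcc a b)) :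
    ∫ x in a..b, (x * k x) ^ 2 ≤
      2 / 3 * (b ^ 3 * k b ^ 2 - a ^ 3 * k a ^ 2) + 4 / 9 * ∫ x in a..b, (x ^ 2 * k' x) ^ 2 := by
  have hkc : ContinuousOn k (uIcc a b) := fun x hx => (hk x hx).continuousAt.continuousWithinAt
  have hF : ∀ x ∈ uIcc a b, HasDerivAt (fun x => x ^ 3 * k x ^ 2 / 3)
      ((x * k x) ^ 2 + 2 / 3 * (x * k x) * (x ^ 2 * k' x)) x := fun x hx => by
    refine (((hasDerivAt_pow 3 x).fun_mul ((hk x hx).fun_pow 2)).div_const 3).congr_deriv ?_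
    push_cast; ring
  have hF' : IntervalIntegrable (fun x => (x * k x) ^ 2 + 2 / 3 * (x * k x) * (x ^ 2 * k' x))
      volume a b := by
    apply ContinuousOn.intervalIntegrable; fun_prop
  have hv : IntervalIntegrable (fun x => (x ^ 2 * k' x) ^ 2) volume a b := by
    apply ContinuousOn.intervalIntegrable; fun_prop
  calc ∫ x in a..b, (x * k x) ^ 2
      ≤ ∫ x in a..b, (2 * ((x * k x) ^ 2 + 2 / 3 * (x * k x) * (x ^ 2 * k' x)) +
          4 / 9 * (x ^ 2 * k' x) ^ 2) := by
        refine intervalIntegral.integral_mono_on hab ?_ ((hF'.const_mul 2).add (hv.const_mul _))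
          fun x _ => ?_
        · apply ContinuousOn.intervalIntegrable; fun_prop
        nlinarith [sq_nonneg (x * k x + 2 / 3 * (x ^ 2 * k' x))]
    _ = _ := by
        rw [intervalIntegral.integral_add (hF'.const_mul 2) (hv.const_mul _),
          intervalIntegral.integral_const_mul, intervalIntegral.integral_const_mul,
          intervalIntegral.integral_eq_sub_of_hasDerivAt hF hF']
        ring

section Hardy

variable {h : ℝ → ℝ}

theorem hardy_intervalIntegral_sub_le (hd : Differentiable ℝ h) (hc : Continuous (deriv h))
    {a b : ℝ} (ha : a ≤ 0) (hb : 0 ≤ b) :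
    (∫ x in a..0, (x * (h x - h a)) ^ 2) + ∫ x in 0..b, (x * (h x - h b)) ^ 2 ≤
      4 / 9 * ∫ x in a..b, (x ^ 2 * deriv h x) ^ 2 := by
  have hk (c x : ℝ) : HasDerivAt (fun y => h y - c) (deriv h x) x :=
    (hd x).hasDerivAt.sub_const c
  have hleft := hardy_intervalIntegral_le ha (fun x _ => hk (h a) x) hc.continuousOn
  have hright := hardy_intervalIntegral_le hb (fun x _ => hk (h b) x) hc.continuousOn
  have hv (s t : ℝ) : IntervalIntegrable (fun x => (x ^ 2 * deriv h x) ^ 2) volume s t :=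
    (by fun_prop : Continuous fun x => (x ^ 2 * deriv h x) ^ 2).intervalIntegrable s t
  rw [← intervalIntegral.integral_add_adjacent_intervals (hv a 0) (hv 0 b)]
  simp only [sub_self] at hleft hright
  linarith

theorem tendsto_intervalIntegral_sq_mul_sub {ι : Type*} {l : Filter ι} (hc : Continuous h)
    {c : ι → ℝ} (hc0 : Tendsto c l (𝓝 0)) (a b : ℝ) :
    Tendsto (fun i => ∫ x in a..b, (x * (h x - c i)) ^ 2) l (𝓝 (∫ x in a..b, (x * h x) ^ 2)) := by
  have hφ : Continuous fun c : ℝ => ∫ x in a..b, (x * (h x - c)) ^ 2 :=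
    intervalIntegral.continuous_parametric_intervalIntegral_of_continuous' (by fun_prop) a b
  simpa [Function.comp_def] using (hφ.tendsto 0).comp hc0

theorem hardy_intervalIntegral_symm_le (hd : Differentiable ℝ h) (hc : Continuous (deriv h))
    (hI : Integrable fun x => (x ^ 2 * deriv h x) ^ 2)
    (htop : Tendsto h atTop (𝓝 0)) (hbot : Tendsto h atBot (𝓝 0)) {r : ℝ} (hr : 0 ≤ r) :
    ∫ x in -r..r, (x * h x) ^ 2 ≤ 4 / 9 * ∫ x, (x ^ 2 * deriv h x) ^ 2 := by
  have hsq (c : ℝ) : Continuous fun x => (x * (h x - c)) ^ 2 := by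
    have := hd.continuous; fun_prop
  have hR : ∀ᶠ R in atTop, (∫ x in -r..0, (x * (h x - h (-R))) ^ 2) +
      ∫ x in 0..r, (x * (h x - h R)) ^ 2 ≤ 4 / 9 * ∫ x, (x ^ 2 * deriv h x) ^ 2 := by
    filter_upwards [eventually_ge_atTop r] with R hrR
    have hleft : ∫ x in -r..0, (x * (h x - h (-R))) ^ 2 ≤ ∫ x in -R..0, (x * (h x - h (-R))) ^ 2 :=
      intervalIntegral.integral_mono_interval (by linarith) (by linarith) le_rfl
        (ae_of_all _ fun _ => sq_nonneg _) ((hsq _).intervalIntegrable _ _)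
    have hright : ∫ x in 0..r, (x * (h x - h R)) ^ 2 ≤ ∫ x in 0..R, (x * (h x - h R)) ^ 2 :=
      intervalIntegral.integral_mono_interval le_rfl hr hrR
        (ae_of_all _ fun _ => sq_nonneg _) ((hsq _).intervalIntegrable _ _)
    have hwhole : ∫ x in -R..R, (x ^ 2 * deriv h x) ^ 2 ≤ ∫ x, (x ^ 2 * deriv h x) ^ 2 := by
      rw [intervalIntegral.integral_of_le (by linarith)]
      exact setIntegral_le_integral hI (ae_of_all _ fun _ => sq_nonneg _)
    linarith [hardy_intervalIntegral_sub_le hd hc (a := -R) (b := R) (by linarith) (by linarith)]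
  have hlim := (tendsto_intervalIntegral_sq_mul_sub hd.continuous
    (hbot.comp tendsto_neg_atTop_atBot) (-r) 0).add
    (tendsto_intervalIntegral_sq_mul_sub hd.continuous htop 0 r)
  have hsplit : (∫ x in -r..0, (x * h x) ^ 2) + ∫ x in 0..r, (x * h x) ^ 2 =
      ∫ x in -r..r, (x * h x) ^ 2 := by
    simpa using intervalIntegral.integral_add_adjacent_intervals
      ((hsq 0).intervalIntegrable (-r) 0) ((hsq 0).intervalIntegrable 0 r)
  exact hsplit ▸ le_of_tendsto hlim hR

theorem hardy_integrable (hd : Differentiable ℝ h) (hc : Continuous (deriv h))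
    (hI : Integrable fun x => (x ^ 2 * deriv h x) ^ 2)
    (htop : Tendsto h atTop (𝓝 0)) (hbot : Tendsto h atBot (𝓝 0)) :
    Integrable fun x => (x * h x) ^ 2 := by
  have hcont : Continuous fun x => (x * h x) ^ 2 := by
    have := hd.continuous; fun_prop
  refine integrable_of_intervalIntegral_norm_bounded (4 / 9 * ∫ x, (x ^ 2 * deriv h x) ^ 2)
    (fun _ => hcont.integrableOn_Ioc) tendsto_neg_atTop_atBot tendsto_id ?_
  filter_upwards [eventually_ge_atTop 0] with r hr
  simpa only [norm_pow, Real.norm_eq_abs, sq_abs, id] using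
    hardy_intervalIntegral_symm_le hd hc hI htop hbot hr

theorem hardy_integral_le (hd : Differentiable ℝ h) (hc : Continuous (deriv h))
    (hI : Integrable fun x => (x ^ 2 * deriv h x) ^ 2)
    (htop : Tendsto h atTop (𝓝 0)) (hbot : Tendsto h atBot (𝓝 0)) :
    ∫ x, (x * h x) ^ 2 ≤ 4 / 9 * ∫ x, (x ^ 2 * deriv h x) ^ 2 :=
  le_of_tendsto (intervalIntegral_tendsto_integral (hardy_integrable hd hc hI htop hbot)
      tendsto_neg_atTop_atBot tendsto_id)
    ((eventually_ge_atTop 0).mono fun _ hr => hardy_intervalIntegral_symm_le hd hc hI htop hbot hr)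

end Hardy

/-- Hardy-type inequality: for `h : ℝ → ℝ` continuously differentiable with
`x² h'(x) ∈ L²` and `h → 0` at `±∞`, one has `‖x h‖_{L²} ≤ C ‖x² h'‖_{L²}`
for a universal constant `C`. -/
theorem hardy_inequality :
    ∃ C : ℝ, 0 < C ∧ ∀ h : ℝ → ℝ, ContDiff ℝ 1 h →
      Integrable (fun x : ℝ => (x ^ 2 * deriv h x) ^ 2) →
      Tendsto h atTop (nhds 0) → Tendsto h atBot (nhds 0) →
      Real.sqrt (∫ x : ℝ, (x * h x) ^ 2) ≤
        C * Real.sqrt (∫ x : ℝ, (x ^ 2 * deriv h x) ^ 2) := by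
  refine ⟨2 / 3, by norm_num, fun h hh hI htop hbot => ?_⟩
  have hle := hardy_integral_le (hh.differentiable one_ne_zero) (hh.continuous_deriv le_rfl)
    hI htop hbot
  calc √(∫ x, (x * h x) ^ 2) ≤ √((2 / 3) ^ 2 * ∫ x, (x ^ 2 * deriv h x) ^ 2) :=
        Real.sqrt_le_sqrt (by linarith)
    _ = 2 / 3 * √(∫ x, (x ^ 2 * deriv h x) ^ 2) := by
        rw [Real.sqrt_mul (by positivity), Real.sqrt_sq (by positivity)]
end

section
/- Uniform decay for Burgers via Cole–Hopf: suppose b(t,x) = 2 h_x(t,x)/h(t,x) where h solves the heat equation with initial data h(1,x) = exp((1/2)∫_{-∞}^x b_0(y)dy) for b_0 ∈ L^1 ∩ L^∞ nonnegative. Then ‖b(t,·)‖_{L^∞} ≤ C ‖b_0‖_{L^1} e^{‖b_0‖_{L^1}} (t-1)^{-1/2} for all t > 1, for a universal constant C. -/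
open MeasureTheory Real

/-!
Both factors of `b = 2 hₓ / h` are controlled by crude bounds on the heat kernel. As `b₀ ≥ 0`
we have `h₀ ≥ 1`, and the heat kernel has unit mass, so `h ≥ 1`. The kernel at time `t - 1` is
bounded by `(t - 1)^(-1/2)`, so `|hₓ| ≤ (t - 1)^(-1/2) ‖h₀'‖_{L¹}`, where `h₀' = b₀ h₀ / 2` and
`h₀ ≤ exp(‖b₀‖_{L¹} / 2)`. The constant `C = 1` works.
-/

noncomputable section

/-- The heat kernel of `∂ₜ = ∂ₓ²`: the Gaussian density of variance `2τ`. -/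
def heatKernel (τ z : ℝ) : ℝ :=
  (4 * π * τ) ^ (-(1 : ℝ) / 2) * exp (-z ^ 2 / (4 * τ))

def heatSemigroup (τ : ℝ) (f : ℝ → ℝ) (x : ℝ) : ℝ :=
  ∫ y, heatKernel τ (x - y) * f y

def coleHopfDatum (b₀ : ℝ → ℝ) (x : ℝ) : ℝ :=
  exp ((1 / 2) * ∫ y in Set.Iic x, b₀ y)

end

section HeatKernel

variable {τ : ℝ}

theorem heatKernel_sub_eq_gaussianPDFReal (hτ : 0 < τ) (x y : ℝ) :
    heatKernel τ (x - y) = ProbabilityTheory.gaussianPDFReal x (2 * τ).toNNReal y := by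
  rw [heatKernel, ProbabilityTheory.gaussianPDFReal, Real.coe_toNNReal _ (by positivity),
    sqrt_eq_rpow, ← rpow_neg (by positivity)]
  congr 2 <;> ring

theorem heatKernel_nonneg (hτ : 0 < τ) (z : ℝ) : 0 ≤ heatKernel τ z := by
  unfold heatKernel
  positivity

theorem heatKernel_le_rpow (hτ : 0 < τ) (z : ℝ) : heatKernel τ z ≤ τ ^ (-(1 : ℝ) / 2) := by
  have h_exp : exp (-z ^ 2 / (4 * τ)) ≤ 1 :=
    exp_le_one_iff.2 (div_nonpos_of_nonpos_of_nonneg (by nlinarith) (by positivity))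
  have h_const : (4 * π * τ) ^ (-(1 : ℝ) / 2) ≤ τ ^ (-(1 : ℝ) / 2) :=
    rpow_le_rpow_of_nonpos hτ (by nlinarith [pi_gt_three]) (by norm_num)
  calc heatKernel τ z ≤ (4 * π * τ) ^ (-(1 : ℝ) / 2) * 1 := by
        unfold heatKernel; gcongr
    _ ≤ τ ^ (-(1 : ℝ) / 2) := by rwa [mul_one]

theorem integrable_heatKernel_sub (hτ : 0 < τ) (x : ℝ) :
    Integrable fun y ↦ heatKernel τ (x - y) := by
  simp_rw [heatKernel_sub_eq_gaussianPDFReal hτ]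
  exact ProbabilityTheory.integrable_gaussianPDFReal x _

theorem integral_heatKernel_sub (hτ : 0 < τ) (x : ℝ) : ∫ y, heatKernel τ (x - y) = 1 := by
  simp_rw [heatKernel_sub_eq_gaussianPDFReal hτ]
  exact ProbabilityTheory.integral_gaussianPDFReal_eq_one x (by simpa using hτ)

theorem le_heatSemigroup (hτ : 0 < τ) {f : ℝ → ℝ} {a B : ℝ} (hf : AEStronglyMeasurable f)
    (hfB : ∀ y, ‖f y‖ ≤ B) (haf : ∀ y, a ≤ f y) (x : ℝ) : a ≤ heatSemigroup τ f x := by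
  have hK := integrable_heatKernel_sub hτ x
  calc a = ∫ y, heatKernel τ (x - y) * a := by
        rw [integral_mul_const, integral_heatKernel_sub hτ, one_mul]
    _ ≤ heatSemigroup τ f x :=
        integral_mono (hK.mul_const a) (hK.mul_bdd hf (.of_forall hfB))
          fun y ↦ mul_le_mul_of_nonneg_left (haf y) (heatKernel_nonneg hτ _)

theorem norm_heatSemigroup_le (hτ : 0 < τ) {f : ℝ → ℝ} (hf : Integrable f) (x : ℝ) :
    ‖heatSemigroup τ f x‖ ≤ τ ^ (-(1 : ℝ) / 2) * ∫ y, ‖f y‖ := by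
  rw [← integral_const_mul]
  refine norm_integral_le_of_norm_le (hf.norm.const_mul _) (.of_forall fun y ↦ ?_)
  rw [norm_mul, norm_of_nonneg (heatKernel_nonneg hτ _)]
  exact mul_le_mul_of_nonneg_right (heatKernel_le_rpow hτ _) (norm_nonneg _)

end HeatKernel

section ColeHopf

variable {b₀ : ℝ → ℝ}

theorem one_le_coleHopfDatum (hb₀ : ∀ x, 0 ≤ b₀ x) (x : ℝ) : 1 ≤ coleHopfDatum b₀ x :=
  one_le_exp (mul_nonneg (by norm_num) (setIntegral_nonneg measurableSet_Iic fun y _ ↦ hb₀ y))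

theorem coleHopfDatum_le (hb₀i : Integrable b₀) (hb₀ : ∀ x, 0 ≤ b₀ x) (x : ℝ) :
    coleHopfDatum b₀ x ≤ exp ((1 / 2) * ∫ y, b₀ y) := by
  unfold coleHopfDatum
  gcongr exp (1 / 2 * ?_)
  exact setIntegral_le_integral hb₀i (.of_forall hb₀)

theorem measurable_coleHopfDatum (hb₀i : Integrable b₀) (hb₀ : ∀ x, 0 ≤ b₀ x) :
    Measurable (coleHopfDatum b₀) := by
  have h_mono : Monotone fun x ↦ ∫ y in Set.Iic x, b₀ y := fun x x' hxx' ↦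
    setIntegral_mono_set hb₀i.integrableOn (.of_forall hb₀)
      (Set.Iic_subset_Iic.2 hxx').eventuallyLE
  exact measurable_exp.comp (h_mono.measurable.const_mul _)

theorem norm_coleHopfDatum_le (hb₀i : Integrable b₀) (hb₀ : ∀ x, 0 ≤ b₀ x) (x : ℝ) :
    ‖coleHopfDatum b₀ x‖ ≤ exp ((1 / 2) * ∫ y, b₀ y) :=
  (norm_of_nonneg (zero_le_one.trans (one_le_coleHopfDatum hb₀ x))).trans_le
    (coleHopfDatum_le hb₀i hb₀ x)

theorem integrable_half_mul_coleHopfDatum (hb₀i : Integrable b₀) (hb₀ : ∀ x, 0 ≤ b₀ x) :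
    Integrable fun y ↦ (1 / 2) * b₀ y * coleHopfDatum b₀ y :=
  (hb₀i.const_mul _).mul_bdd (measurable_coleHopfDatum hb₀i hb₀).aestronglyMeasurable
    (.of_forall (norm_coleHopfDatum_le hb₀i hb₀))

theorem integral_norm_half_mul_coleHopfDatum_le (hb₀i : Integrable b₀) (hb₀ : ∀ x, 0 ≤ b₀ x) :
    ∫ y, ‖(1 / 2) * b₀ y * coleHopfDatum b₀ y‖ ≤
      (1 / 2) * exp ((1 / 2) * ∫ y, b₀ y) * ∫ y, b₀ y := by
  rw [← integral_const_mul]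
  refine integral_mono_of_nonneg (.of_forall fun _ ↦ norm_nonneg _) (hb₀i.const_mul _)
    (.of_forall fun y ↦ ?_)
  have h_b₀ := hb₀ y
  have h_datum := zero_le_one.trans (one_le_coleHopfDatum hb₀ y)
  calc ‖(1 / 2) * b₀ y * coleHopfDatum b₀ y‖ = (1 / 2) * b₀ y * coleHopfDatum b₀ y :=
        norm_of_nonneg (by positivity)
    _ ≤ (1 / 2) * b₀ y * exp ((1 / 2) * ∫ y, b₀ y) := by
        gcongr
        exact coleHopfDatum_le hb₀i hb₀ y
    _ = _ := by ring

end ColeHopf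

/-- Uniform decay for Burgers via Cole–Hopf: with `h₀(x) = exp((1/2)∫_{-∞}^x b₀)`,
`h(t,x) = ∫ Γ_{t-1}(x-y) h₀(y) dy`, `hₓ(t,x) = ∫ Γ_{t-1}(x-y)(1/2) b₀(y) h₀(y) dy`,
and `b(t,x) = 2 hₓ(t,x)/h(t,x)`, for `b₀ ∈ L¹ ∩ L^∞` nonnegative one has
`‖b(t,·)‖_{L^∞} ≤ C ‖b₀‖_{L¹} e^{‖b₀‖_{L¹}} (t-1)^{-1/2}` for all `t > 1`. -/
theorem burgers_uniform_decay :
    ∃ C : ℝ, 0 < C ∧ ∀ b₀ : ℝ → ℝ, Integrable b₀ → (∀ x, 0 ≤ b₀ x) →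
      (∃ M : ℝ, ∀ x, b₀ x ≤ M) →
      ∀ (h₀ : ℝ → ℝ), (∀ x, h₀ x = Real.exp ((1 / 2) * ∫ y in Set.Iic x, b₀ y)) →
      ∀ (h hx b : ℝ → ℝ → ℝ),
      (∀ t x, h t x = ∫ y : ℝ, (4 * Real.pi * (t - 1)) ^ (-(1 : ℝ) / 2) *
          Real.exp (-(x - y) ^ 2 / (4 * (t - 1))) * h₀ y) →
      (∀ t x, hx t x = ∫ y : ℝ, (4 * Real.pi * (t - 1)) ^ (-(1 : ℝ) / 2) *
          Real.exp (-(x - y) ^ 2 / (4 * (t - 1))) * ((1 / 2) * b₀ y * h₀ y)) →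
      (∀ t x, b t x = 2 * hx t x / h t x) →
      ∀ t : ℝ, 1 < t → ∀ x : ℝ,
        |b t x| ≤ C * (∫ y : ℝ, b₀ y) * Real.exp (∫ y : ℝ, b₀ y) *
          (t - 1) ^ (-(1 : ℝ) / 2) := by
  refine ⟨1, one_pos, ?_⟩
  rintro b₀ hb₀i hb₀ - h₀ hh₀ h hx b hh hhx hb t ht x
  obtain rfl : h₀ = coleHopfDatum b₀ := funext hh₀
  have hτ : 0 < t - 1 := sub_pos.2 ht
  set I := ∫ y, b₀ y
  have h_ge_one : 1 ≤ h t x := by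
    rw [hh]
    exact le_heatSemigroup hτ (measurable_coleHopfDatum hb₀i hb₀).aestronglyMeasurable
      (norm_coleHopfDatum_le hb₀i hb₀) (one_le_coleHopfDatum hb₀) x
  have hx_le : |hx t x| ≤ (t - 1) ^ (-(1 : ℝ) / 2) * ((1 / 2) * exp ((1 / 2) * I) * I) := by
    rw [hhx]
    refine (norm_heatSemigroup_le hτ (integrable_half_mul_coleHopfDatum hb₀i hb₀) x).trans ?_
    gcongr
    exact integral_norm_half_mul_coleHopfDatum_le hb₀i hb₀
  have hI : 0 ≤ I := integral_nonneg hb₀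
  rw [hb, abs_div, abs_mul, abs_two, abs_of_pos (zero_lt_one.trans_le h_ge_one)]
  calc 2 * |hx t x| / h t x ≤ 2 * |hx t x| := div_le_self (by positivity) h_ge_one
    _ ≤ (t - 1) ^ (-(1 : ℝ) / 2) * exp ((1 / 2) * I) * I := by linarith
    _ ≤ (t - 1) ^ (-(1 : ℝ) / 2) * exp I * I := by gcongr; linarith
    _ = 1 * I * exp I * (t - 1) ^ (-(1 : ℝ) / 2) := by ring
end
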